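/- Let γ > 2 and let H : [0,1] → ℝ be smooth with all derivatives vanishing at 0 and 1. Then lim_{N→∞} (1/N) ∑_{x=1}^{N-1} H(x/N)² · (N^γ r_N^-(x/N) − r^-(x/N))² = 0, where r_N^-(x/N) = ∑_{y ≥ x} c_γ y^{-(1+γ)} and r^-(u) = c_γ γ^{-1} u^{-γ}. -/

import Mathlib

open Filter Topology



lemma aux_taylor (H : ℝ → ℝ) (hH : ContDiff ℝ (⊤ : ℕ∞) H) (h0 : ∀ i, iteratedDeriv i H 0 = 0) :
    ∀ m i : ℕ, ∃ C : ℝ, 0 ≤ C ∧ ∀ u ∈ Set.Icc (0:ℝ) 1, |iteratedDeriv i H u| ≤ C * u ^ m := by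
  have hsm : ∀ i, ContDiff ℝ (⊤:ℕ∞) (iteratedDeriv i H) := fun i => by
    rw [iteratedDeriv_eq_iterate]; exact (hH.of_le (by simp)).iterate_deriv i
  intro m
  induction m with
  | zero =>
    intro i
    obtain ⟨C, hC⟩ := (isCompact_Icc (a := (0:ℝ)) (b := 1)).exists_bound_of_continuousOn
      ((hsm i).continuous.continuousOn)
    refine ⟨max C 0, le_max_right _ _, fun u hu => ?_⟩
    have := (hC u hu).trans (le_max_left C 0)
    simpa using this
  | succ m ih =>
    intro i
    obtain ⟨C, hC0, hC⟩ := ih (i + 1)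
    refine ⟨C, hC0, fun u hu => ?_⟩
    have hu0 : (0:ℝ) ≤ u := hu.1
    have hderiv : ∀ t ∈ Set.uIcc (0:ℝ) u, HasDerivAt (iteratedDeriv i H)
        (iteratedDeriv (i + 1) H t) t := fun t _ => by
      rw [iteratedDeriv_succ]
      exact (((hsm i).differentiable (by simp)) t).hasDerivAt
    have hint : IntervalIntegrable (iteratedDeriv (i + 1) H) MeasureTheory.volume 0 u :=
      ((hsm (i + 1)).continuous).intervalIntegrable _ _
    have heq : iteratedDeriv i H u = ∫ t in (0:ℝ)..u, iteratedDeriv (i + 1) H t := by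
      rw [intervalIntegral.integral_eq_sub_of_hasDerivAt hderiv hint, h0 i, sub_zero]
    rw [heq]
    have h2 : ∫ t in (0:ℝ)..u, |iteratedDeriv (i + 1) H t| ≤ ∫ t in (0:ℝ)..u, C * t ^ m := by
      refine intervalIntegral.integral_mono_on hu0
        (((hsm (i + 1)).continuous.abs).intervalIntegrable _ _)
        ((continuous_const.mul (continuous_pow m)).intervalIntegrable _ _) (fun t ht => ?_)
      exact hC t ⟨ht.1, ht.2.trans hu.2⟩
    have h3 : ∫ t in (0:ℝ)..u, C * t ^ m = C * (u ^ (m + 1) / (m + 1)) := by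
      rw [intervalIntegral.integral_const_mul, integral_pow]
      ring
    calc |∫ t in (0:ℝ)..u, iteratedDeriv (i + 1) H t|
        ≤ ∫ t in (0:ℝ)..u, |iteratedDeriv (i + 1) H t| :=
          intervalIntegral.abs_integral_le_integral_abs hu0
      _ ≤ C * (u ^ (m + 1) / (m + 1)) := h2.trans_eq h3
      _ ≤ C * u ^ (m + 1) := by
          apply mul_le_mul_of_nonneg_left _ hC0
          apply div_le_self (pow_nonneg hu0 _)
          exact_mod_cast Nat.one_le_iff_ne_zero.mpr (Nat.succ_ne_zero m)


lemma term_ineq (γ : ℝ) (hγ : 0 < γ) (a : ℝ) (ha : 1 ≤ a) :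
    γ * (a + 1) ^ (-(1 + γ)) ≤ a ^ (-γ) - (a + 1) ^ (-γ) ∧
      a ^ (-γ) - (a + 1) ^ (-γ) ≤ γ * a ^ (-(1 + γ)) := by
  have ha0 : (0:ℝ) < a := lt_of_lt_of_le one_pos ha
  have ha1 : (0:ℝ) < a + 1 := by linarith
  set r : ℝ := -(1 + γ) with hr
  have hI : ∫ t in a..(a + 1), t ^ r = ((a + 1) ^ (-γ) - a ^ (-γ)) / (-γ) := by
    rw [integral_rpow (Or.inr ⟨by rw [hr]; intro h; linarith [neg_eq_iff_eq_neg.mp h],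
      by rw [Set.uIcc_of_le (by linarith : a ≤ a + 1)]; exact fun h => absurd h.1 (by linarith)⟩)]
    have : r + 1 = -γ := by rw [hr]; ring
    rw [this]
  have hcont : ContinuousOn (fun t : ℝ => t ^ r) (Set.uIcc a (a + 1)) := by
    intro t ht
    rw [Set.uIcc_of_le (by linarith : a ≤ a + 1)] at ht
    exact (Real.continuousAt_rpow_const t r
      (Or.inl (by intro h; rw [h] at ht; linarith [ht.1]))).continuousWithinAt
  have hint : IntervalIntegrable (fun t : ℝ => t ^ r) MeasureTheory.volume a (a + 1) :=
    hcont.intervalIntegrable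
  have hr0 : r ≤ 0 := by rw [hr]; linarith
  have hub : ∫ t in a..(a + 1), t ^ r ≤ a ^ r := by
    have := intervalIntegral.integral_mono_on (by linarith : a ≤ a + 1) hint
      (intervalIntegrable_const (c := a ^ r)) (fun t ht => Real.rpow_le_rpow_of_nonpos ha0 ht.1 hr0)
    simpa using this
  have hlb : (a + 1) ^ r ≤ ∫ t in a..(a + 1), t ^ r := by
    have := intervalIntegral.integral_mono_on (by linarith : a ≤ a + 1)
      (intervalIntegrable_const (c := (a + 1) ^ r)) hint
      (fun t ht => Real.rpow_le_rpow_of_nonpos (lt_of_lt_of_le ha0 ht.1) ht.2 hr0)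
    simpa using this
  have key : a ^ (-γ) - (a + 1) ^ (-γ) = γ * ∫ t in a..(a + 1), t ^ r := by
    rw [hI]; field_simp [hγ.ne']; ring
  constructor
  · rw [key]; exact mul_le_mul_of_nonneg_left hlb hγ.le
  · rw [key]; exact mul_le_mul_of_nonneg_left hub hγ.le

lemma tail_bound (γ : ℝ) (hγ : 0 < γ) (x : ℕ) (hx : 1 ≤ x) :
    (x:ℝ) ^ (-γ) / γ ≤ (∑' y : ℕ, if x ≤ y then (y:ℝ) ^ (-(1 + γ)) else 0) ∧
      (∑' y : ℕ, if x ≤ y then (y:ℝ) ^ (-(1 + γ)) else 0) ≤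
        (x:ℝ) ^ (-γ) / γ + (x:ℝ) ^ (-(1 + γ)) := by
  set g : ℕ → ℝ := fun y => (y:ℝ) ^ (-(1 + γ)) with hg
  have hsum : Summable g := Real.summable_nat_rpow.mpr (by linarith)
  have hshift : Summable (fun n => g (n + x)) := (summable_nat_add_iff x).mpr hsum
  have hshift1 : Summable (fun n => g (n + x + 1)) := by
    have := (summable_nat_add_iff (x + 1)).mpr hsum
    simpa [add_assoc] using this
  have hsumif : Summable (fun y => if x ≤ y then g y else 0) := by
    refine Summable.of_nonneg_of_le (fun y => ?_) (fun y => ?_) hsum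
    · split <;> [exact Real.rpow_nonneg (Nat.cast_nonneg y) _; exact le_refl 0]
    · split <;> [exact le_refl _; exact Real.rpow_nonneg (Nat.cast_nonneg y) _]
  have hS : (∑' y : ℕ, if x ≤ y then g y else 0) = ∑' n : ℕ, g (n + x) := by
    rw [← Summable.sum_add_tsum_nat_add x hsumif]
    have h1 : ∑ i ∈ Finset.range x, (if x ≤ i then g i else 0) = 0 :=
      Finset.sum_eq_zero fun i hi => by
        simp [Nat.not_le.mpr (Finset.mem_range.mp hi)]
    have h2 : ∀ n : ℕ, (if x ≤ n + x then g (n + x) else 0) = g (n + x) := fun n => by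
      simp [Nat.le_add_left]
    simp only [h2, h1, zero_add]
  set F : ℕ → ℝ := fun n => (n:ℝ) ^ (-γ) / γ with hF
  set t : ℕ → ℝ := fun n => F (n + x) - F (n + x + 1) with ht
  have hcast : ∀ n : ℕ, ((n + x + 1 : ℕ) : ℝ) = ((n + x : ℕ) : ℝ) + 1 := fun n => by push_cast; ring
  have h1x : ∀ n : ℕ, (1:ℝ) ≤ ((n + x : ℕ) : ℝ) := fun n => by
    exact_mod_cast hx.trans (Nat.le_add_left x n)
  have hterm : ∀ n : ℕ, γ * g (n + x + 1) ≤
      ((n + x : ℕ) : ℝ) ^ (-γ) - ((n + x + 1 : ℕ) : ℝ) ^ (-γ) ∧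
      ((n + x : ℕ) : ℝ) ^ (-γ) - ((n + x + 1 : ℕ) : ℝ) ^ (-γ) ≤ γ * g (n + x) := by
    intro n
    simp only [hg, hcast n]
    exact term_ineq γ hγ _ (h1x n)
  have htle : ∀ n, t n ≤ g (n + x) := fun n => by
    have h := (hterm n).2
    simp only [ht, hF, div_sub_div_same]
    rw [div_le_iff₀ hγ]
    linarith
  have htge : ∀ n, g (n + x + 1) ≤ t n := fun n => by
    have h := (hterm n).1
    simp only [ht, hF, div_sub_div_same]
    rw [le_div_iff₀ hγ]
    linarith
  have htnonneg : ∀ n, 0 ≤ t n := fun n =>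
    le_trans (Real.rpow_nonneg (by positivity) _) (htge n)
  have htsummable : Summable t := Summable.of_nonneg_of_le htnonneg htle hshift
  have htel : HasSum t (F x) := by
    rw [htsummable.hasSum_iff_tendsto_nat]
    have hps : ∀ n, ∑ i ∈ Finset.range n, t i = F x - F (n + x) := by
      intro n
      have h := Finset.sum_range_sub' (fun i => F (i + x)) n
      simp only [Nat.zero_add] at h
      rw [← h]
      apply Finset.sum_congr rfl
      intro i _
      simp only [ht]
      congr 2
      omega
    simp only [hps]
    have hFlim : Tendsto (fun n : ℕ => F (n + x)) atTop (𝓝 0) := by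
      have h1 : Tendsto (fun y : ℝ => y ^ (-γ)) atTop (𝓝 0) := tendsto_rpow_neg_atTop hγ
      have h2 : Tendsto (fun n : ℕ => ((n + x : ℕ) : ℝ)) atTop atTop :=
        tendsto_natCast_atTop_atTop.comp (tendsto_add_atTop_nat x)
      have h3 := (h1.comp h2).div_const γ
      simpa [hF, Function.comp] using h3
    have h4 := (tendsto_const_nhds (x := F x) (f := atTop (α := ℕ))).sub hFlim
    simpa using h4
  rw [hS]
  constructor
  · have h5 := Summable.tsum_le_tsum htle htsummable hshift
    rw [htel.tsum_eq] at h5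
    simpa [hF] using h5
  · have heq : (∑' n : ℕ, g (n + x)) = g x + ∑' n : ℕ, g (n + x + 1) := by
      have h6 := Summable.tsum_eq_zero_add hshift
      simp only [zero_add] at h6
      rw [h6]
      congr 1
      apply tsum_congr
      intro n
      congr 1
      omega
    rw [heq]
    have h7 := Summable.tsum_le_tsum htge hshift1 htsummable
    rw [htel.tsum_eq] at h7
    simp only [hF] at h7 ⊢
    simp only [hg]
    linarith

theorem stmt5 (γ c : ℝ) (hγ : 2 < γ) (hc : 0 < c) (H : ℝ → ℝ)
    (hH : ContDiff ℝ (⊤ : ℕ∞) H)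
    (h0 : ∀ i : ℕ, iteratedDeriv i H 0 = 0)
    (h1 : ∀ i : ℕ, iteratedDeriv i H 1 = 0) :
    Tendsto (fun N : ℕ =>
        (1 / (N : ℝ)) * ∑ x ∈ Finset.Ico 1 N,
          (H ((x : ℝ) / N)) ^ 2 *
            ((N : ℝ) ^ γ * (∑' y : ℕ, if x ≤ y then c * (y : ℝ) ^ (-(1 + γ)) else 0)
              - c / γ * ((x : ℝ) / N) ^ (-γ)) ^ 2)
      atTop (nhds 0) := by
  have hγ0 : (0:ℝ) < γ := by linarith
  set m : ℕ := ⌈γ⌉₊ + 1 with hm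
  obtain ⟨C, hC0, hC⟩ := aux_taylor H hH h0 m 0
  simp only [iteratedDeriv_zero] at hC
  have hme : (2:ℝ) + 2 * γ ≤ 2 * m := by
    have := Nat.le_ceil γ
    push_cast [hm]
    push_cast at this
    linarith
  set B : ℝ := C ^ 2 * c ^ 2 with hB
  have hB0 : 0 ≤ B := by positivity
  refine squeeze_zero' ?_ ?_ (tendsto_const_div_atTop_nhds_zero_nat B)
  · refine Eventually.of_forall fun N => ?_
    apply mul_nonneg (by positivity)
    exact Finset.sum_nonneg fun x _ => mul_nonneg (sq_nonneg _) (sq_nonneg _)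
  · filter_upwards [eventually_ge_atTop 1] with N hN
    have hNpos : (0:ℝ) < N := by exact_mod_cast hN
    have hterm : ∀ x ∈ Finset.Ico 1 N,
        (H ((x : ℝ) / N)) ^ 2 *
            ((N : ℝ) ^ γ * (∑' y : ℕ, if x ≤ y then c * (y : ℝ) ^ (-(1 + γ)) else 0)
              - c / γ * ((x : ℝ) / N) ^ (-γ)) ^ 2 ≤ B * ((N:ℝ) ^ 2)⁻¹ := by
      intro x hx
      obtain ⟨hx1, hx2⟩ := Finset.mem_Ico.mp hx
      have hx0 : (0:ℝ) < x := by exact_mod_cast hx1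
      have hxle : (x:ℝ) ≤ N := by exact_mod_cast (le_of_lt hx2)
      set u : ℝ := (x:ℝ) / N with hu
      have hu0 : 0 < u := div_pos hx0 hNpos
      have hu1 : u ≤ 1 := (div_le_one hNpos).mpr hxle
      set S : ℝ := ∑' y : ℕ, if x ≤ y then (y:ℝ) ^ (-(1 + γ)) else 0 with hS
      have hts : (∑' y : ℕ, if x ≤ y then c * (y : ℝ) ^ (-(1 + γ)) else 0) = c * S := by
        rw [hS, ← tsum_mul_left]
        exact tsum_congr fun y => by split <;> simp
      obtain ⟨hlb, hub⟩ := tail_bound γ hγ0 x hx1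
      have hdiv : ∀ z : ℝ, u ^ (-z) = (x:ℝ) ^ (-z) * (N:ℝ) ^ z := by
        intro z
        rw [hu, Real.div_rpow hx0.le hNpos.le, Real.rpow_neg hNpos.le, div_eq_mul_inv, inv_inv]
      have hD : (N : ℝ) ^ γ * (c * S) - c / γ * u ^ (-γ)
          = c * (N:ℝ) ^ γ * (S - (x:ℝ) ^ (-γ) / γ) := by
        rw [hdiv γ]; ring
      set E : ℝ := c * (N:ℝ) ^ γ * (x:ℝ) ^ (-(1 + γ)) with hE
      have hNγ : (0:ℝ) < (N:ℝ) ^ γ := Real.rpow_pos_of_pos hNpos _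
      have hD0 : 0 ≤ (N : ℝ) ^ γ * (c * S) - c / γ * u ^ (-γ) := by
        rw [hD]
        apply mul_nonneg (by positivity)
        linarith
      have hDE : (N : ℝ) ^ γ * (c * S) - c / γ * u ^ (-γ) ≤ E := by
        rw [hD, hE]
        rw [mul_assoc, mul_assoc]
        apply mul_le_mul_of_nonneg_left _ hc.le
        apply mul_le_mul_of_nonneg_left _ hNγ.le
        linarith
      have hDsq : ((N : ℝ) ^ γ * (c * S) - c / γ * u ^ (-γ)) ^ 2 ≤ E ^ 2 :=
        pow_le_pow_left₀ hD0 hDE 2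
      have hHsq : (H u) ^ 2 ≤ C ^ 2 * u ^ (2 * m) := by
        have h := hC u ⟨hu0.le, hu1⟩
        calc (H u) ^ 2 = |H u| ^ 2 := (sq_abs _).symm
          _ ≤ (C * u ^ m) ^ 2 := pow_le_pow_left₀ (abs_nonneg _) h 2
          _ = C ^ 2 * u ^ (2 * m) := by rw [mul_pow, ← pow_mul]; ring_nf
      have hEeq : E = c * (N:ℝ)⁻¹ * u ^ (-(1 + γ)) := by
        rw [hE, hdiv (1 + γ)]
        rw [Real.rpow_add hNpos 1 γ, Real.rpow_one]
        field_simp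
      have hkey : u ^ (2 * m) * ((N:ℝ)⁻¹ * u ^ (-(1 + γ))) ^ 2 ≤ ((N:ℝ) ^ 2)⁻¹ := by
        have h1 : u ^ (2 * m) * (u ^ (-(1 + γ))) ^ 2 ≤ 1 := by
          rw [← Real.rpow_natCast u (2 * m), ← Real.rpow_natCast (u ^ (-(1 + γ))) 2,
            ← Real.rpow_mul hu0.le, ← Real.rpow_add hu0]
          apply Real.rpow_le_one hu0.le hu1
          push_cast
          linarith [Nat.le_ceil γ, hme]
        calc u ^ (2 * m) * ((N:ℝ)⁻¹ * u ^ (-(1 + γ))) ^ 2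
            = (u ^ (2 * m) * (u ^ (-(1 + γ))) ^ 2) * ((N:ℝ) ^ 2)⁻¹ := by
              rw [mul_pow]; ring_nf
          _ ≤ 1 * ((N:ℝ) ^ 2)⁻¹ := by
              apply mul_le_mul_of_nonneg_right h1 (by positivity)
          _ = ((N:ℝ) ^ 2)⁻¹ := one_mul _
      calc (H u) ^ 2 * ((N : ℝ) ^ γ * (∑' y : ℕ, if x ≤ y then c * (y : ℝ) ^ (-(1 + γ)) else 0)
              - c / γ * u ^ (-γ)) ^ 2
          = (H u) ^ 2 * ((N : ℝ) ^ γ * (c * S) - c / γ * u ^ (-γ)) ^ 2 := by rw [hts]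
        _ ≤ (C ^ 2 * u ^ (2 * m)) * E ^ 2 := by
            apply mul_le_mul hHsq hDsq (sq_nonneg _) (by positivity)
        _ = B * (u ^ (2 * m) * ((N:ℝ)⁻¹ * u ^ (-(1 + γ))) ^ 2) := by
            rw [hEeq, hB]; ring
        _ ≤ B * ((N:ℝ) ^ 2)⁻¹ := mul_le_mul_of_nonneg_left hkey hB0
    calc (1 / (N : ℝ)) * ∑ x ∈ Finset.Ico 1 N,
          (H ((x : ℝ) / N)) ^ 2 *
            ((N : ℝ) ^ γ * (∑' y : ℕ, if x ≤ y then c * (y : ℝ) ^ (-(1 + γ)) else 0)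
              - c / γ * ((x : ℝ) / N) ^ (-γ)) ^ 2
        ≤ (1 / (N : ℝ)) * ∑ x ∈ Finset.Ico 1 N, B * ((N:ℝ) ^ 2)⁻¹ := by
          apply mul_le_mul_of_nonneg_left (Finset.sum_le_sum hterm) (by positivity)
      _ = (1 / (N : ℝ)) * ((N - 1 : ℕ) * (B * ((N:ℝ) ^ 2)⁻¹)) := by
          rw [Finset.sum_const, Nat.card_Ico, nsmul_eq_mul]
      _ ≤ (1 / (N : ℝ)) * ((N : ℝ) * (B * ((N:ℝ) ^ 2)⁻¹)) := by
          apply mul_le_mul_of_nonneg_left _ (by positivity)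
          apply mul_le_mul_of_nonneg_right _ (by positivity)
          exact_mod_cast Nat.sub_le N 1
      _ = B / (N:ℝ) ^ 2 := by field_simp
      _ ≤ B / (N:ℝ) := by
          have hN1 : (1:ℝ) ≤ N := by exact_mod_cast hN
          rw [div_le_div_iff₀ (by positivity) hNpos]
          nlinarith [mul_nonneg hB0 (mul_nonneg (le_of_lt hNpos) (sub_nonneg.mpr hN1))]
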